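/- Let E be a real Banach space and let f : (0,T] → E be continuous and twice continuously differentiable on (0,T), with ‖f'(s)‖ ≤ C₀ s^{α−1} and ‖f''(s)‖ ≤ C₀ s^{α−2} for all s ∈ (0,T), where 0 < α < 1. On the graded mesh t_n = T(n/N)^r define, for 2 ≤ n ≤ N, the modified trapezoidal quadrature error Q^{n−σ} = Σ_{j=2}^{n−1} (τ_j/2)(f(t_{j−1}) + f(t_j)) + (1−σ) τ_n f(t_{n−1}) − ∫_{t_1}^{t_{n−σ}} f(s) ds. Then there exists a constant C, depending only on C₀, α, σ, r, T and independent of n and N, such that for all 2 ≤ n ≤ N: ‖Q^{n−σ}‖ ≤ C N^{−min{r(1+α), 2}} if r(1+α) ≠ 2, and ‖Q^{n−σ}‖ ≤ C N^{−2} (1 + ln N) if r(1+α) = 2. -/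

import Mathlib

/-
Split `Q^{n-σ}` into the trapezoidal errors on `[t_{j-1}, t_j]`, `2 ≤ j ≤ n-1`, and the
left-rectangle error on `[t_{n-1}, t_{n-σ}]`. By Peano-kernel estimates these are at most
`t_{j-1}^{α-2} τ_j^3` and `t_{n-1}^{α-1} τ_n^2` up to constants. On the graded mesh
`t_{j-1} ≥ 2^{-r} t_j` and `τ_j ≤ r t_j / j`, so with `β = r(1+α)` the errors are
`O(j^{β-3} N^{-β})` and `O(n^{β-2} N^{-β})`. Summing, `∑_{j ≥ 2} j^{β-3}` is bounded for
`β < 2`, grows like `log N` for `β = 2` and like `N^{β-2}` for `β > 2`.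
-/

open MeasureTheory

/-- The graded temporal mesh `t_n = T (n/N)^r` on `[0,T]`. -/
noncomputable def meshT (T r : ℝ) (N : ℕ) (n : ℕ) : ℝ := T * ((n : ℝ) / (N : ℝ)) ^ r

/-- The time steps `τ_n = t_n - t_{n-1}`. -/
noncomputable def meshTau (T r : ℝ) (N : ℕ) (n : ℕ) : ℝ := meshT T r N n - meshT T r N (n - 1)

/-- The intermediate points `t_{n-σ} = (1-σ) t_n + σ t_{n-1}`. -/
noncomputable def meshTSig (T r σ : ℝ) (N : ℕ) (n : ℕ) : ℝ :=
  (1 - σ) * meshT T r N n + σ * meshT T r N (n - 1)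

open Set

section LocalError
variable {E : Type*} [NormedAddCommGroup E] [NormedSpace ℝ E] [CompleteSpace E]
  {f f' f'' : ℝ → E} {a b M : ℝ}

theorem norm_leftRectangle_sub_integral_le (hab : a ≤ b)
    (hf : ∀ x ∈ Icc a b, HasDerivAt f (f' x) x) (hM : ∀ x ∈ Icc a b, ‖f' x‖ ≤ M) :
    ‖(b - a) • f a - ∫ x in a..b, f x‖ ≤ M * (b - a) ^ 2 := by
  have hfc : ContinuousOn f (uIcc a b) := by
    rw [uIcc_of_le hab]; exact fun x hx => (hf x hx).continuousAt.continuousWithinAt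
  have hM0 : 0 ≤ M := (norm_nonneg _).trans (hM a ⟨le_rfl, hab⟩)
  have hlip : ∀ x ∈ uIoc a b, ‖f a - f x‖ ≤ M * (b - a) := fun x hx => by
    rw [uIoc_of_le hab] at hx
    rw [norm_sub_rev]
    calc ‖f x - f a‖ ≤ M * ‖x - a‖ :=
          (convex_Icc a b).norm_image_sub_le_of_norm_hasDerivWithin_le
            (fun y hy => (hf y hy).hasDerivWithinAt) hM ⟨le_rfl, hab⟩ (Ioc_subset_Icc_self hx)
      _ ≤ M * (b - a) := by
          rw [Real.norm_of_nonneg (by linarith [hx.1])]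
          exact mul_le_mul_of_nonneg_left (by linarith [hx.2]) hM0
  calc ‖(b - a) • f a - ∫ x in a..b, f x‖ = ‖∫ x in a..b, (f a - f x)‖ := by
        rw [intervalIntegral.integral_sub intervalIntegrable_const hfc.intervalIntegrable,
          intervalIntegral.integral_const]
    _ ≤ M * (b - a) * |b - a| := intervalIntegral.norm_integral_le_of_norm_le_const hlip
    _ = M * (b - a) ^ 2 := by rw [abs_of_nonneg (sub_nonneg.2 hab)]; ring

theorem trapezoid_sub_integral_eq (hab : a ≤ b) (hf : ∀ x ∈ Icc a b, HasDerivAt f (f' x) x)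
    (hf' : ContinuousOn f' (Icc a b)) :
    ((b - a) / 2) • (f a + f b) - ∫ x in a..b, f x =
      ∫ x in a..b, (x - (a + b) / 2) • (f' x - f' ((a + b) / 2)) := by
  set m := (a + b) / 2
  have hparts : ∫ x in a..b, (x - m) • f' x =
      ((b - a) / 2) • (f a + f b) - ∫ x in a..b, f x := by
    rw [intervalIntegral.integral_smul_deriv_eq_deriv_smul (u := fun x => x - m)
      (u' := fun _ => (1 : ℝ)) (fun x _ => (hasDerivAt_id x).sub_const m)
      (fun x hx => hf x (by rwa [uIcc_of_le hab] at hx)) intervalIntegrable_const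
      ((hf'.mono (by rw [uIcc_of_le hab])).intervalIntegrable)]
    simp only [one_smul, smul_add]
    rw [show b - m = (b - a) / 2 by ring, show a - m = -((b - a) / 2) by ring, neg_smul]
    abel
  have hkernel : ∫ x in a..b, (x - m) • f' m = 0 := by
    rw [intervalIntegral.integral_smul_const, intervalIntegral.integral_sub
      intervalIntegral.intervalIntegrable_id intervalIntegrable_const, integral_id,
      intervalIntegral.integral_const, smul_eq_mul,
      show (b ^ 2 - a ^ 2) / 2 - (b - a) * m = 0 by ring, zero_smul]
  have hint : IntervalIntegrable (fun x => (x - m) • f' x) volume a b :=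
    ((continuousOn_id.sub continuousOn_const).smul hf').intervalIntegrable_of_Icc hab
  simp only [smul_sub]
  rw [intervalIntegral.integral_sub hint
    ((by fun_prop : Continuous fun x : ℝ => (x - m) • f' m).intervalIntegrable _ _),
    hkernel, sub_zero, hparts]

theorem norm_trapezoid_sub_integral_le (hab : a ≤ b)
    (hf : ∀ x ∈ Icc a b, HasDerivAt f (f' x) x)
    (hf' : ∀ x ∈ Icc a b, HasDerivAt f' (f'' x) x) (hM : ∀ x ∈ Icc a b, ‖f'' x‖ ≤ M) :
    ‖((b - a) / 2) • (f a + f b) - ∫ x in a..b, f x‖ ≤ M * (b - a) ^ 3 / 4 := by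
  rw [trapezoid_sub_integral_eq hab hf fun x hx => (hf' x hx).continuousAt.continuousWithinAt]
  set m := (a + b) / 2 with hm
  have hM0 : 0 ≤ M := (norm_nonneg _).trans (hM a ⟨le_rfl, hab⟩)
  have hbound : ∀ x ∈ uIoc a b,
      ‖(x - m) • (f' x - f' m)‖ ≤ (b - a) / 2 * (M * ((b - a) / 2)) := by
    intro x hx
    rw [uIoc_of_le hab] at hx
    have hxm : ‖x - m‖ ≤ (b - a) / 2 := by
      rw [Real.norm_eq_abs, abs_le]; constructor <;> linarith [hx.1, hx.2]
    rw [norm_smul]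
    refine mul_le_mul hxm ?_ (norm_nonneg _) (by linarith)
    calc ‖f' x - f' m‖ ≤ M * ‖x - m‖ :=
          (convex_Icc a b).norm_image_sub_le_of_norm_hasDerivWithin_le
            (fun y hy => (hf' y hy).hasDerivWithinAt) hM ⟨by linarith, by linarith⟩
            (Ioc_subset_Icc_self hx)
      _ ≤ M * ((b - a) / 2) := mul_le_mul_of_nonneg_left hxm hM0
  calc _ ≤ (b - a) / 2 * (M * ((b - a) / 2)) * |b - a| :=
        intervalIntegral.norm_integral_le_of_norm_le_const hbound
    _ = M * (b - a) ^ 3 / 4 := by rw [abs_of_nonneg (sub_nonneg.2 hab)]; ring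

end LocalError

theorem intervalIntegral.sum_Icc_two_integral_adjacent_intervals {E : Type*} [NormedAddCommGroup E]
    [NormedSpace ℝ E] {f : ℝ → E} {a : ℕ → ℝ} {m : ℕ} (hm : 1 ≤ m)
    (hint : ∀ j ∈ Finset.Icc 2 m, IntervalIntegrable f volume (a (j - 1)) (a j)) :
    ∑ j ∈ Finset.Icc 2 m, ∫ x in a (j - 1)..a j, f x = ∫ x in a 1..a m, f x := by
  have hshift := intervalIntegral.sum_integral_adjacent_intervals (a := fun k => a (k + 1))
    (n := m - 1) (f := f) (μ := volume) fun k hk => by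
      simpa using hint (k + 2) (Finset.mem_Icc.2 ⟨by omega, by omega⟩)
  rw [← Finset.Ico_add_one_right_eq_Icc, Finset.sum_Ico_eq_sum_range]
  simp only [zero_add, Nat.sub_add_cancel hm] at hshift
  rw [show m + 1 - 2 = m - 1 by omega, ← hshift]
  refine Finset.sum_congr rfl fun k _ => ?_
  rw [show 2 + k - 1 = k + 1 by omega, show 2 + k = k + 1 + 1 by omega]

theorem Finset.sum_Icc_two_le_sub_of_le_sub {g F : ℕ → ℝ} {m : ℕ} (hm : 1 ≤ m)
    (h : ∀ j, 2 ≤ j → g j ≤ F j - F (j - 1)) :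
    ∑ j ∈ Finset.Icc 2 m, g j ≤ F m - F 1 := by
  induction m, hm using Nat.le_induction with
  | base => simp
  | succ m hm ih =>
    rw [Finset.sum_Icc_succ_top (by omega)]
    have := h (m + 1) (by omega)
    rw [Nat.add_sub_cancel] at this
    linarith

theorem rpow_le_two_rpow_mul_sub_rpow {γ x : ℝ} (hγ : γ ≠ -1) (hx : 2 ≤ x) :
    x ^ γ ≤ 2 ^ max γ 0 * ((x ^ (γ + 1) - (x - 1) ^ (γ + 1)) / (γ + 1)) := by
  have hγ1 : γ + 1 ≠ 0 := by contrapose! hγ; linarith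
  obtain ⟨c, hc, hslope⟩ := exists_hasDerivAt_eq_slope (fun t => t ^ (γ + 1) / (γ + 1))
    (fun t => t ^ γ) (by linarith : x - 1 < x)
    (fun t ht => ((Real.continuousAt_rpow_const _ _ (Or.inl (by linarith [ht.1]))).div_const
      _).continuousWithinAt)
    (fun t ht => by
      simpa [hγ1] using ((Real.hasDerivAt_rpow_const (p := γ + 1)
        (Or.inl (by linarith [ht.1]))).div_const (γ + 1)))
  rw [sub_sub_cancel, div_one, ← sub_div] at hslope
  rw [← hslope]
  have hc0 : 0 < c := by linarith [hc.1]
  rcases le_total γ 0 with hγ0 | hγ0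
  · rw [max_eq_right hγ0, Real.rpow_zero, one_mul]
    exact Real.rpow_le_rpow_of_nonpos hc0 hc.2.le hγ0
  · rw [max_eq_left hγ0, ← Real.mul_rpow (by norm_num) hc0.le]
    exact Real.rpow_le_rpow (by linarith) (by linarith [hc.1]) hγ0

theorem inv_le_log_sub_log_sub_one {x : ℝ} (hx : 1 < x) :
    x⁻¹ ≤ Real.log x - Real.log (x - 1) := by
  have h := Real.log_le_sub_one_of_pos (show 0 < (x - 1) / x by positivity)
  rw [Real.log_div (by linarith) (by linarith), sub_div, div_self (by linarith), one_div] at h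
  linarith

theorem sum_Icc_rpow_le_of_ne_neg_one {γ : ℝ} (hγ : γ ≠ -1) {m : ℕ} (hm : 1 ≤ m) :
    ∑ j ∈ Finset.Icc 2 m, (j : ℝ) ^ γ ≤
      2 ^ max γ 0 * (((m : ℝ) ^ (γ + 1) - 1) / (γ + 1)) := by
  have htele := Finset.sum_Icc_two_le_sub_of_le_sub hm (g := fun j => (j : ℝ) ^ γ)
    (F := fun j => 2 ^ max γ 0 * ((j : ℝ) ^ (γ + 1) / (γ + 1))) fun j hj => by
      simpa [Nat.cast_sub (by omega : 1 ≤ j), mul_sub, sub_div] using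
        rpow_le_two_rpow_mul_sub_rpow hγ (show (2 : ℝ) ≤ j by exact_mod_cast hj)
  simpa [mul_sub, sub_div] using htele

theorem sum_Icc_inv_le_log {m : ℕ} (hm : 1 ≤ m) :
    ∑ j ∈ Finset.Icc 2 m, (j : ℝ)⁻¹ ≤ Real.log m := by
  simpa using Finset.sum_Icc_two_le_sub_of_le_sub (F := fun j => Real.log j) hm fun j hj => by
    simpa [Nat.cast_sub (by omega : 1 ≤ j)] using
      inv_le_log_sub_log_sub_one (show (1 : ℝ) < j by exact_mod_cast hj)

section GradedSum

/-- What the local quadrature errors on the graded mesh add up to, with `β = r(1+α)`. -/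
noncomputable def gradedErrorSum (β : ℝ) (N n : ℕ) : ℝ :=
  (∑ j ∈ Finset.Icc 2 (n - 1), (j : ℝ) ^ (β - 3) + (n : ℝ) ^ (β - 2)) * (N : ℝ) ^ (-β)

variable {β : ℝ} {N n : ℕ}

theorem gradedErrorSum_le_of_lt_two (hβ : β < 2) (hn : 2 ≤ n) :
    gradedErrorSum β N n ≤ (1 / (2 - β) + 1) * (N : ℝ) ^ (-β) := by
  have hsum := sum_Icc_rpow_le_of_ne_neg_one (γ := β - 3) (by linarith) (m := n - 1) (by omega)
  rw [max_eq_right (by linarith), Real.rpow_zero, one_mul, show β - 3 + 1 = β - 2 by ring,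
    ← neg_div_neg_eq, neg_sub, neg_sub] at hsum
  have hm : 0 ≤ ((n - 1 : ℕ) : ℝ) ^ (β - 2) := by positivity
  unfold gradedErrorSum
  gcongr
  · exact hsum.trans (by gcongr; linarith)
  · exact Real.rpow_le_one_of_one_le_of_nonpos (by exact_mod_cast (by omega : 1 ≤ n))
      (by linarith)

theorem gradedErrorSum_le_of_eq_two (hβ : β = 2) (hn : 2 ≤ n) (hnN : n ≤ N) :
    gradedErrorSum β N n ≤ (N : ℝ) ^ (-(2 : ℝ)) * (1 + Real.log N) := by
  have hsum := sum_Icc_inv_le_log (m := n - 1) (by omega)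
  have hlog : Real.log (n - 1 : ℕ) ≤ Real.log N :=
    Real.log_le_log (by exact_mod_cast (by omega : 0 < n - 1)) (by exact_mod_cast (by omega))
  unfold gradedErrorSum
  subst hβ
  simp only [show (2 : ℝ) - 3 = -1 by norm_num, sub_self, Real.rpow_neg_one, Real.rpow_zero]
  rw [mul_comm, add_comm]
  gcongr
  exact hsum.trans hlog

theorem gradedErrorSum_le_of_two_lt (hβ : 2 < β) (hn : 2 ≤ n) (hnN : n ≤ N) :
    gradedErrorSum β N n ≤ (2 ^ max (β - 3) 0 / (β - 2) + 1) * (N : ℝ) ^ (-(2 : ℝ)) := by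
  have hsum := sum_Icc_rpow_le_of_ne_neg_one (γ := β - 3) (by linarith) (m := n - 1) (by omega)
  rw [show β - 3 + 1 = β - 2 by ring] at hsum
  have hN : (0 : ℝ) < N := by exact_mod_cast (by omega : 0 < N)
  have hsum' : ∑ j ∈ Finset.Icc 2 (n - 1), (j : ℝ) ^ (β - 3) ≤
      2 ^ max (β - 3) 0 / (β - 2) * (N : ℝ) ^ (β - 2) := by
    refine hsum.trans ?_
    rw [mul_div_assoc', div_mul_eq_mul_div]
    gcongr
    exact (sub_le_self _ zero_le_one).trans <| Real.rpow_le_rpow (by positivity)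
      (by exact_mod_cast (by omega : n - 1 ≤ N)) (by linarith)
  have hn' : (n : ℝ) ^ (β - 2) ≤ (N : ℝ) ^ (β - 2) :=
    Real.rpow_le_rpow (by positivity) (by exact_mod_cast hnN) (by linarith)
  calc gradedErrorSum β N n
      ≤ (2 ^ max (β - 3) 0 / (β - 2) * (N : ℝ) ^ (β - 2) + (N : ℝ) ^ (β - 2)) *
          (N : ℝ) ^ (-β) := by
        unfold gradedErrorSum; gcongr
    _ = (2 ^ max (β - 3) 0 / (β - 2) + 1) * ((N : ℝ) ^ (β - 2) * (N : ℝ) ^ (-β)) := by ring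
    _ = (2 ^ max (β - 3) 0 / (β - 2) + 1) * (N : ℝ) ^ (-(2 : ℝ)) := by
        rw [← Real.rpow_add hN, show β - 2 + -β = -2 by ring]

end GradedSum

section Mesh
variable {T r σ : ℝ} {N : ℕ}

theorem meshT_pos (hT : 0 < T) (hN : 0 < N) {j : ℕ} (hj : 0 < j) : 0 < meshT T r N j :=
  mul_pos hT (Real.rpow_pos_of_pos (by positivity) r)

theorem meshT_mono (hT : 0 ≤ T) (hr : 0 ≤ r) : Monotone (meshT T r N) := fun j k hjk => by
  unfold meshT
  gcongr

theorem meshT_le (hT : 0 ≤ T) (hr : 0 ≤ r) {j : ℕ} (hj : j ≤ N) : meshT T r N j ≤ T :=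
  mul_le_of_le_one_right hT <| Real.rpow_le_one (by positivity)
    (div_le_one_of_le₀ (by exact_mod_cast hj) (Nat.cast_nonneg N)) hr

theorem meshT_lt (hT : 0 < T) (hr : 0 < r) {j : ℕ} (hj : j < N) : meshT T r N j < T :=
  mul_lt_of_lt_one_right hT <| Real.rpow_lt_one (by positivity)
    ((div_lt_one (by exact_mod_cast (j.zero_le.trans_lt hj))).2 (by exact_mod_cast hj)) hr

theorem meshTau_nonneg (hT : 0 ≤ T) (hr : 0 ≤ r) (j : ℕ) : 0 ≤ meshTau T r N j :=
  sub_nonneg.2 (meshT_mono hT hr (Nat.sub_le j 1))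

theorem two_rpow_neg_mul_meshT_le (hT : 0 ≤ T) (hr : 0 ≤ r) {j : ℕ} (hj : 2 ≤ j) :
    2 ^ (-r) * meshT T r N j ≤ meshT T r N (j - 1) := by
  have hj' : (2 : ℝ) ≤ j := by exact_mod_cast hj
  unfold meshT
  rw [Nat.cast_sub (by omega), Nat.cast_one, Real.rpow_neg (by norm_num),
    ← Real.inv_rpow (by norm_num), mul_left_comm, ← Real.mul_rpow (by norm_num) (by positivity)]
  gcongr
  rw [inv_mul_eq_div, div_right_comm]
  gcongr
  linarith

theorem meshTau_le (hT : 0 ≤ T) (hr : 1 ≤ r) {j : ℕ} (hj : 1 ≤ j) :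
    meshTau T r N j ≤ r * meshT T r N j / j := by
  have hj' : (1 : ℝ) ≤ j := by exact_mod_cast hj
  have hbernoulli := one_add_mul_self_le_rpow_one_add (s := -(j : ℝ)⁻¹)
    (by linarith [inv_le_one_of_one_le₀ hj']) hr
  have hsplit : meshT T r N (j - 1) = meshT T r N j * (1 + -(j : ℝ)⁻¹) ^ r := by
    unfold meshT
    rw [mul_assoc, ← Real.mul_rpow (by positivity) (by linarith [inv_le_one_of_one_le₀ hj']),
      Nat.cast_sub hj, Nat.cast_one]
    congr 2
    field_simp
    ring
  have hpos : 0 ≤ meshT T r N j := mul_nonneg hT (by positivity)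
  unfold meshTau
  rw [hsplit, div_eq_mul_inv]
  linarith [mul_le_mul_of_nonneg_left hbernoulli hpos]

theorem meshT_sub_one_rpow_mul_meshTau_pow_le (hT : 0 < T) (hr : 1 ≤ r) (hN : 0 < N) {j : ℕ}
    (hj : 2 ≤ j) {p : ℝ} (hp : p ≤ 0) (k : ℕ) :
    meshT T r N (j - 1) ^ p * meshTau T r N j ^ k ≤
      2 ^ (-r * p) * r ^ k * (meshT T r N j ^ (p + k) / j ^ k) := by
  have htj : 0 < meshT T r N j := meshT_pos hT hN (by omega)
  have hlower : meshT T r N (j - 1) ^ p ≤ (2 ^ (-r) * meshT T r N j) ^ p :=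
    Real.rpow_le_rpow_of_nonpos (by positivity)
      (two_rpow_neg_mul_meshT_le hT.le (by linarith) hj) hp
  have hτ : 0 ≤ meshTau T r N j := meshTau_nonneg hT.le (by linarith) j
  have hupper : meshTau T r N j ^ k ≤ (r * meshT T r N j / j) ^ k :=
    pow_le_pow_left₀ hτ (meshTau_le hT.le hr (by omega)) k
  calc meshT T r N (j - 1) ^ p * meshTau T r N j ^ k
      ≤ (2 ^ (-r) * meshT T r N j) ^ p * (r * meshT T r N j / j) ^ k :=
        mul_le_mul hlower hupper (pow_nonneg hτ k) (by positivity)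
    _ = 2 ^ (-r * p) * r ^ k * (meshT T r N j ^ (p + k) / j ^ k) := by
        rw [Real.mul_rpow (by positivity) htj.le, ← Real.rpow_mul (by norm_num),
          Real.rpow_add htj, Real.rpow_natCast]
        ring

theorem meshT_rpow_div_pow (hT : 0 ≤ T) (hN : 0 < N) {j : ℕ} (hj : 0 < j) (s : ℝ) (k : ℕ) :
    meshT T r N j ^ s / j ^ k = T ^ s * ((j : ℝ) ^ (r * s - k) * (N : ℝ) ^ (-(r * s))) := by
  have hj' : (0 : ℝ) < j := by exact_mod_cast hj
  have hN' : (0 : ℝ) < N := by exact_mod_cast hN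
  unfold meshT
  rw [Real.mul_rpow hT (by positivity), ← Real.rpow_mul (by positivity),
    Real.div_rpow hj'.le hN'.le, Real.rpow_sub hj', Real.rpow_neg hN'.le, Real.rpow_natCast]
  field_simp

theorem meshTSig_sub_meshT (T r σ : ℝ) (N n : ℕ) :
    meshTSig T r σ N n - meshT T r N (n - 1) = (1 - σ) * meshTau T r N n := by
  unfold meshTSig meshTau
  ring

theorem meshTSig_lt (hT : 0 < T) (hr : 0 < r) (hσ0 : 0 < σ) (hσ1 : σ ≤ 1)
    {n : ℕ} (hn : 1 ≤ n) (hnN : n ≤ N) : meshTSig T r σ N n < T := by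
  have h1 := meshT_le hT.le hr.le (r := r) (N := N) hnN
  have h2 := meshT_lt hT hr (N := N) (show n - 1 < N by omega)
  unfold meshTSig
  nlinarith

theorem meshT_sub_one_le_meshTSig (hT : 0 ≤ T) (hr : 0 ≤ r) (hσ1 : σ ≤ 1) {n : ℕ} :
    meshT T r N (n - 1) ≤ meshTSig T r σ N n := by
  have := meshTSig_sub_meshT T r σ N n
  have := meshTau_nonneg hT hr (N := N) n
  nlinarith

end Mesh

section QuadratureError
variable {E : Type*} [NormedAddCommGroup E] [NormedSpace ℝ E]

/-- The quadrature error `Q^{n-σ}`. -/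
noncomputable def trapezoidQuadError (T r σ : ℝ) (f : ℝ → E) (N n : ℕ) : E :=
  (∑ j ∈ Finset.Icc 2 (n - 1),
      (meshTau T r N j / 2) • (f (meshT T r N (j - 1)) + f (meshT T r N j))) +
    ((1 - σ) * meshTau T r N n) • f (meshT T r N (n - 1)) -
    ∫ s in (meshT T r N 1)..(meshTSig T r σ N n), f s

variable {T r α σ C₀ : ℝ} {f f' f'' : ℝ → E}

theorem trapezoidQuadError_eq (hT : 0 < T) (hr : 0 < r) (hσ0 : 0 < σ) (hσ1 : σ ≤ 1)
    (hf : ContinuousOn f (Ioo 0 T)) {N n : ℕ} (hn : 2 ≤ n) (hnN : n ≤ N) :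
    trapezoidQuadError T r σ f N n =
      ∑ j ∈ Finset.Icc 2 (n - 1),
          ((meshTau T r N j / 2) • (f (meshT T r N (j - 1)) + f (meshT T r N j)) -
            ∫ s in meshT T r N (j - 1)..meshT T r N j, f s) +
        (((1 - σ) * meshTau T r N n) • f (meshT T r N (n - 1)) -
          ∫ s in meshT T r N (n - 1)..meshTSig T r σ N n, f s) := by
  have hmem : ∀ j, 1 ≤ j → j < N → meshT T r N j ∈ Ioo 0 T := fun j hj hjN =>
    ⟨meshT_pos hT (by omega) hj, meshT_lt hT hr hjN⟩
  have hsig : meshTSig T r σ N n ∈ Ioo 0 T :=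
    ⟨(hmem (n - 1) (by omega) (by omega)).1.trans_le (meshT_sub_one_le_meshTSig hT.le hr.le hσ1),
      meshTSig_lt hT hr hσ0 hσ1 (by omega) hnN⟩
  have hint : ∀ u ∈ Ioo 0 T, ∀ v ∈ Ioo 0 T, IntervalIntegrable f volume u v :=
    fun u hu v hv => (hf.mono (ordConnected_Ioo.uIcc_subset hu hv)).intervalIntegrable
  rw [trapezoidQuadError, Finset.sum_sub_distrib,
    ← intervalIntegral.integral_add_adjacent_intervals (b := meshT T r N (n - 1))
      (hint _ (hmem 1 le_rfl (by omega)) _ (hmem (n - 1) (by omega) (by omega)))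
      (hint _ (hmem (n - 1) (by omega) (by omega)) _ hsig),
    ← intervalIntegral.sum_Icc_two_integral_adjacent_intervals (by omega) fun j hj => by
      obtain ⟨hj2, hjn⟩ := Finset.mem_Icc.1 hj
      exact hint _ (hmem _ (by omega) (by omega)) _ (hmem _ (by omega) (by omega))]
  abel

variable [CompleteSpace E]

theorem norm_trapezoid_mesh_sub_integral_le (hT : 0 < T) (hr : 1 ≤ r) (hα : α < 1)
    (hC₀ : 0 ≤ C₀) (hf' : ∀ s ∈ Ioo (0 : ℝ) T, HasDerivAt f (f' s) s)
    (hf'' : ∀ s ∈ Ioo (0 : ℝ) T, HasDerivAt f' (f'' s) s)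
    (hb2 : ∀ s ∈ Ioo (0 : ℝ) T, ‖f'' s‖ ≤ C₀ * s ^ (α - 2))
    {N j : ℕ} (hj : 2 ≤ j) (hjN : j < N) :
    ‖(meshTau T r N j / 2) • (f (meshT T r N (j - 1)) + f (meshT T r N j)) -
        ∫ s in meshT T r N (j - 1)..meshT T r N j, f s‖ ≤
      C₀ / 4 * 2 ^ (-r * (α - 2)) * r ^ 3 * T ^ (1 + α) *
        ((j : ℝ) ^ (r * (1 + α) - 3) * (N : ℝ) ^ (-(r * (1 + α)))) := by
  have hN : 0 < N := by omega
  have ha : 0 < meshT T r N (j - 1) := meshT_pos hT hN (by omega)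
  have hsub : Icc (meshT T r N (j - 1)) (meshT T r N j) ⊆ Ioo 0 T :=
    Icc_subset_Ioo ha (meshT_lt hT (by linarith) hjN)
  have hlocal := norm_trapezoid_sub_integral_le (meshT_mono hT.le (by linarith) (Nat.sub_le j 1))
    (fun x hx => hf' x (hsub hx)) (fun x hx => hf'' x (hsub hx))
    (M := C₀ * meshT T r N (j - 1) ^ (α - 2)) fun x hx => (hb2 x (hsub hx)).trans
      (mul_le_mul_of_nonneg_left (Real.rpow_le_rpow_of_nonpos ha hx.1 (by linarith)) hC₀)
  have hmesh := meshT_sub_one_rpow_mul_meshTau_pow_le hT hr hN hj (p := α - 2) (by linarith) 3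
  rw [Nat.cast_ofNat, show α - 2 + 3 = 1 + α by ring, meshT_rpow_div_pow hT.le hN (by omega)]
    at hmesh
  calc _ ≤ C₀ * meshT T r N (j - 1) ^ (α - 2) * meshTau T r N j ^ 3 / 4 := hlocal
    _ = C₀ / 4 * (meshT T r N (j - 1) ^ (α - 2) * meshTau T r N j ^ 3) := by ring
    _ ≤ C₀ / 4 * (2 ^ (-r * (α - 2)) * r ^ 3 * (T ^ (1 + α) *
          ((j : ℝ) ^ (r * (1 + α) - 3) * (N : ℝ) ^ (-(r * (1 + α)))))) :=
        mul_le_mul_of_nonneg_left hmesh (by positivity)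
    _ = _ := by ring

theorem norm_leftRectangle_mesh_sub_integral_le (hT : 0 < T) (hr : 1 ≤ r) (hα : α < 1)
    (hσ0 : 0 < σ) (hσ1 : σ ≤ 1) (hC₀ : 0 ≤ C₀)
    (hf' : ∀ s ∈ Ioo (0 : ℝ) T, HasDerivAt f (f' s) s)
    (hb1 : ∀ s ∈ Ioo (0 : ℝ) T, ‖f' s‖ ≤ C₀ * s ^ (α - 1))
    {N n : ℕ} (hn : 2 ≤ n) (hnN : n ≤ N) :
    ‖((1 - σ) * meshTau T r N n) • f (meshT T r N (n - 1)) -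
        ∫ s in meshT T r N (n - 1)..meshTSig T r σ N n, f s‖ ≤
      C₀ * 2 ^ (-r * (α - 1)) * r ^ 2 * T ^ (1 + α) *
        ((n : ℝ) ^ (r * (1 + α) - 2) * (N : ℝ) ^ (-(r * (1 + α)))) := by
  have hN : 0 < N := by omega
  have ha : 0 < meshT T r N (n - 1) := meshT_pos hT hN (by omega)
  have hsub : Icc (meshT T r N (n - 1)) (meshTSig T r σ N n) ⊆ Ioo 0 T :=
    Icc_subset_Ioo ha (meshTSig_lt hT (by linarith) hσ0 hσ1 (by omega) hnN)
  have hlocal := norm_leftRectangle_sub_integral_le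
    (meshT_sub_one_le_meshTSig hT.le (by linarith) hσ1) (fun x hx => hf' x (hsub hx))
    (M := C₀ * meshT T r N (n - 1) ^ (α - 1)) fun x hx => (hb1 x (hsub hx)).trans
      (mul_le_mul_of_nonneg_left (Real.rpow_le_rpow_of_nonpos ha hx.1 (by linarith)) hC₀)
  rw [meshTSig_sub_meshT] at hlocal
  have hτ := meshTau_nonneg hT.le (by linarith) (r := r) (N := N) n
  have hstep : ((1 - σ) * meshTau T r N n) ^ 2 ≤ meshTau T r N n ^ 2 :=
    pow_le_pow_left₀ (mul_nonneg (by linarith) hτ) (mul_le_of_le_one_left hτ (by linarith)) 2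
  have hmesh := meshT_sub_one_rpow_mul_meshTau_pow_le hT hr hN hn (p := α - 1) (by linarith) 2
  rw [Nat.cast_ofNat, show α - 1 + 2 = 1 + α by ring, meshT_rpow_div_pow hT.le hN (by omega)]
    at hmesh
  calc _ ≤ C₀ * meshT T r N (n - 1) ^ (α - 1) * ((1 - σ) * meshTau T r N n) ^ 2 := hlocal
    _ ≤ C₀ * (meshT T r N (n - 1) ^ (α - 1) * meshTau T r N n ^ 2) := by
        rw [mul_assoc]; gcongr
    _ ≤ C₀ * (2 ^ (-r * (α - 1)) * r ^ 2 * (T ^ (1 + α) *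
          ((n : ℝ) ^ (r * (1 + α) - 2) * (N : ℝ) ^ (-(r * (1 + α)))))) :=
        mul_le_mul_of_nonneg_left hmesh hC₀
    _ = _ := by ring

theorem exists_norm_trapezoidQuadError_le (hT : 0 < T) (hr : 1 ≤ r) (hα : α < 1) (hσ0 : 0 < σ)
    (hσ1 : σ ≤ 1) (hC₀ : 0 < C₀) (hf' : ∀ s ∈ Ioo (0 : ℝ) T, HasDerivAt f (f' s) s)
    (hf'' : ∀ s ∈ Ioo (0 : ℝ) T, HasDerivAt f' (f'' s) s)
    (hb1 : ∀ s ∈ Ioo (0 : ℝ) T, ‖f' s‖ ≤ C₀ * s ^ (α - 1))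
    (hb2 : ∀ s ∈ Ioo (0 : ℝ) T, ‖f'' s‖ ≤ C₀ * s ^ (α - 2)) :
    ∃ K, 0 < K ∧ ∀ N n : ℕ, 2 ≤ n → n ≤ N →
      ‖trapezoidQuadError T r σ f N n‖ ≤ K * gradedErrorSum (r * (1 + α)) N n := by
  set K₁ := C₀ / 4 * 2 ^ (-r * (α - 2)) * r ^ 3 * T ^ (1 + α)
  set K₂ := C₀ * 2 ^ (-r * (α - 1)) * r ^ 2 * T ^ (1 + α)
  have hK₁ : 0 < K₁ := by positivity
  have hK₂ : 0 < K₂ := by positivity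
  refine ⟨K₁ + K₂, by positivity, fun N n hn hnN => ?_⟩
  rw [trapezoidQuadError_eq hT (by linarith) hσ0 hσ1
    (fun x hx => (hf' x hx).continuousAt.continuousWithinAt) hn hnN]
  set S := ∑ j ∈ Finset.Icc 2 (n - 1), (j : ℝ) ^ (r * (1 + α) - 3)
  set P := (N : ℝ) ^ (-(r * (1 + α)))
  set m := (n : ℝ) ^ (r * (1 + α) - 2)
  have hS : 0 ≤ S := Finset.sum_nonneg fun j _ => by positivity
  calc _ ≤ ∑ j ∈ Finset.Icc 2 (n - 1),
          ‖(meshTau T r N j / 2) • (f (meshT T r N (j - 1)) + f (meshT T r N j)) -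
            ∫ s in meshT T r N (j - 1)..meshT T r N j, f s‖ +
        ‖((1 - σ) * meshTau T r N n) • f (meshT T r N (n - 1)) -
          ∫ s in meshT T r N (n - 1)..meshTSig T r σ N n, f s‖ :=
        (norm_add_le _ _).trans (add_le_add_left (norm_sum_le _ _) _)
    _ ≤ ∑ j ∈ Finset.Icc 2 (n - 1), K₁ * ((j : ℝ) ^ (r * (1 + α) - 3) * P) +
          K₂ * (m * P) := by
        gcongr with j hj
        · rw [Finset.mem_Icc] at hj
          exact norm_trapezoid_mesh_sub_integral_le hT hr hα hC₀.le hf' hf'' hb2 hj.1 (by omega)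
        · exact norm_leftRectangle_mesh_sub_integral_le hT hr hα hσ0 hσ1 hC₀.le hf' hb1 hn hnN
    _ ≤ (K₁ + K₂) * gradedErrorSum (r * (1 + α)) N n := by
        rw [← Finset.mul_sum, ← Finset.sum_mul, gradedErrorSum]
        have : 0 ≤ K₁ * (m * P) + K₂ * (S * P) := by positivity
        nlinarith

end QuadratureError

theorem stmt12_general (E : Type*) [NormedAddCommGroup E] [NormedSpace ℝ E] [CompleteSpace E]
    (T r α σ C₀ : ℝ) (hT : 0 < T) (hr : 1 ≤ r) (hα1 : α < 1)
    (hσ0 : 0 < σ) (hσ1 : σ < 1) (hC₀ : 0 < C₀)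
    (f f' f'' : ℝ → E)
    (hf' : ∀ s ∈ Set.Ioo (0 : ℝ) T, HasDerivAt f (f' s) s)
    (hf'' : ∀ s ∈ Set.Ioo (0 : ℝ) T, HasDerivAt f' (f'' s) s)
    (hb1 : ∀ s ∈ Set.Ioo (0 : ℝ) T, ‖f' s‖ ≤ C₀ * s ^ (α - 1))
    (hb2 : ∀ s ∈ Set.Ioo (0 : ℝ) T, ‖f'' s‖ ≤ C₀ * s ^ (α - 2)) :
    ∃ C : ℝ, 0 < C ∧ ∀ N : ℕ, 2 ≤ N → ∀ n : ℕ, 2 ≤ n → n ≤ N →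
      (r * (1 + α) ≠ 2 →
        ‖(∑ j ∈ Finset.Icc 2 (n - 1),
            (meshTau T r N j / 2) • (f (meshT T r N (j - 1)) + f (meshT T r N j))) +
          ((1 - σ) * meshTau T r N n) • f (meshT T r N (n - 1)) -
          ∫ s in (meshT T r N 1)..(meshTSig T r σ N n), f s‖ ≤
        C * (N : ℝ) ^ (-min (r * (1 + α)) 2)) ∧
      (r * (1 + α) = 2 →
        ‖(∑ j ∈ Finset.Icc 2 (n - 1),
            (meshTau T r N j / 2) • (f (meshT T r N (j - 1)) + f (meshT T r N j))) +
          ((1 - σ) * meshTau T r N n) • f (meshT T r N (n - 1)) -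
          ∫ s in (meshT T r N 1)..(meshTSig T r σ N n), f s‖ ≤
        C * (N : ℝ) ^ (-(2 : ℝ)) * (1 + Real.log N)) := by
  obtain ⟨K, hK, hQ⟩ :=
    exists_norm_trapezoidQuadError_le hT hr hα1 hσ0 hσ1.le hC₀ hf' hf'' hb1 hb2
  rcases lt_trichotomy (r * (1 + α)) 2 with hβ | hβ | hβ
  · refine ⟨K * (1 / (2 - r * (1 + α)) + 1), mul_pos hK (by have := sub_pos.2 hβ; positivity),
      fun N _ n hn hnN => ⟨fun _ => ?_, fun h => absurd h hβ.ne⟩⟩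
    rw [min_eq_left hβ.le, mul_assoc]
    exact (hQ N n hn hnN).trans
      (mul_le_mul_of_nonneg_left (gradedErrorSum_le_of_lt_two hβ hn) hK.le)
  · refine ⟨K, hK, fun N _ n hn hnN => ⟨fun h => absurd hβ h, fun _ => ?_⟩⟩
    rw [mul_assoc]
    exact (hQ N n hn hnN).trans
      (mul_le_mul_of_nonneg_left (gradedErrorSum_le_of_eq_two hβ hn hnN) hK.le)
  · refine ⟨K * (2 ^ max (r * (1 + α) - 3) 0 / (r * (1 + α) - 2) + 1),
      mul_pos hK (by have := sub_pos.2 hβ; positivity),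
      fun N _ n hn hnN => ⟨fun _ => ?_, fun h => absurd h hβ.ne'⟩⟩
    rw [min_eq_right hβ.le, mul_assoc]
    exact (hQ N n hn hnN).trans
      (mul_le_mul_of_nonneg_left (gradedErrorSum_le_of_two_lt hβ hn hnN) hK.le)

/-- Error of the modified trapezoidal quadrature
`Q^{n-σ} = Σ_{j=2}^{n-1} (τ_j/2)(f(t_{j-1})+f(t_j)) + (1-σ)τ_n f(t_{n-1})
- ∫_{t_1}^{t_{n-σ}} f(s) ds` for a Banach-space valued `f` continuous on `(0,T]`,
twice continuously differentiable on `(0,T)` with `‖f'(s)‖ ≤ C₀ s^{α-1}` and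
`‖f''(s)‖ ≤ C₀ s^{α-2}`: one has `‖Q^{n-σ}‖ ≤ C N^{-min{r(1+α),2}}` if `r(1+α) ≠ 2`,
and `‖Q^{n-σ}‖ ≤ C N^{-2}(1 + ln N)` if `r(1+α) = 2`, with `C` independent
of `n` and `N`. -/
theorem stmt12 (E : Type*) [NormedAddCommGroup E] [NormedSpace ℝ E] [CompleteSpace E]
    (T r α σ C₀ : ℝ) (hT : 0 < T) (hr : 1 ≤ r) (hα0 : 0 < α) (hα1 : α < 1)
    (hσ0 : 0 < σ) (hσ1 : σ < 1) (hC₀ : 0 < C₀)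
    (f f' f'' : ℝ → E)
    (hf : ContinuousOn f (Set.Ioc 0 T))
    (hf' : ∀ s ∈ Set.Ioo (0 : ℝ) T, HasDerivAt f (f' s) s)
    (hf'' : ∀ s ∈ Set.Ioo (0 : ℝ) T, HasDerivAt f' (f'' s) s)
    (hf''c : ContinuousOn f'' (Set.Ioo 0 T))
    (hb1 : ∀ s ∈ Set.Ioo (0 : ℝ) T, ‖f' s‖ ≤ C₀ * s ^ (α - 1))
    (hb2 : ∀ s ∈ Set.Ioo (0 : ℝ) T, ‖f'' s‖ ≤ C₀ * s ^ (α - 2)) :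
    ∃ C : ℝ, 0 < C ∧ ∀ N : ℕ, 2 ≤ N → ∀ n : ℕ, 2 ≤ n → n ≤ N →
      (r * (1 + α) ≠ 2 →
        ‖(∑ j ∈ Finset.Icc 2 (n - 1),
            (meshTau T r N j / 2) • (f (meshT T r N (j - 1)) + f (meshT T r N j))) +
          ((1 - σ) * meshTau T r N n) • f (meshT T r N (n - 1)) -
          ∫ s in (meshT T r N 1)..(meshTSig T r σ N n), f s‖ ≤
        C * (N : ℝ) ^ (-min (r * (1 + α)) 2)) ∧
      (r * (1 + α) = 2 →
        ‖(∑ j ∈ Finset.Icc 2 (n - 1),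
            (meshTau T r N j / 2) • (f (meshT T r N (j - 1)) + f (meshT T r N j))) +
          ((1 - σ) * meshTau T r N n) • f (meshT T r N (n - 1)) -
          ∫ s in (meshT T r N 1)..(meshTSig T r σ N n), f s‖ ≤
        C * (N : ℝ) ^ (-(2 : ℝ)) * (1 + Real.log N)) :=
  stmt12_general E T r α σ C₀ hT hr hα1 hσ0 hσ1 hC₀ f f' f'' hf' hf'' hb1 hb2
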